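/- Let F be a pricing function with marginal-rate function G and let f>0 be the unit trading fee. Fix α>0 and β>0 with G(β)/α > 1+f. Then there exists a unique pair (d^A,d^B) with d^A < 0 and d^B ∈ (0,1) satisfying the system of equations (1−d^A)/(1−d^B) = (1/β)·G⁻¹(α(1+f)) and F(β(1−d^A), 1−d^B) = F(β, 1), where G⁻¹ denotes the inverse function of G. -/

import Mathlib

/-!
Put `z = G⁻¹(α(1+f))`; since `G` is decreasing and `G z = α(1+f) < G β`, we have `β < z`.
With `s = 1 - dᴮ`, the system says exactly that `β(1 - dᴬ) = z s` and `F(z s, s) = F(β, 1)`.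
Along the ray `s ↦ (z s, s)` the function `F` is continuous and strictly increasing, below
`F(β, 1)` at `s = β/z` and above it at `s = 1`, so there is exactly one such `s`, and it lies in
`(β/z, 1)`: this is `dᴬ < 0` and `dᴮ ∈ (0, 1)`.
-/

open Set Filter Topology

/-- A pricing function `F` with partial derivatives `Fx`, `Fy` and marginal-rate
function `G` (with derivative `G'`), as in Assumption 1 (Pricing Formula):
(i) `F` is continuously differentiable with positive partial derivatives;
(ii) `Fx/Fy = G(x/y)` where `G` is continuously differentiable, strictly
decreasing (negative derivative), with `G → ∞` at `0⁺` and `G → 0` at `∞`;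
(iii) homogeneity of level sets. -/
structure PricingFunction (F Fx Fy : ℝ → ℝ → ℝ) (G G' : ℝ → ℝ) : Prop where
  partialX : ∀ x y : ℝ, 0 < x → 0 < y → HasDerivAt (fun t => F t y) (Fx x y) x
  partialY : ∀ x y : ℝ, 0 < x → 0 < y → HasDerivAt (fun t => F x t) (Fy x y) y
  contX : ContinuousOn (fun p : ℝ × ℝ => Fx p.1 p.2) (Ioi 0 ×ˢ Ioi 0)
  contY : ContinuousOn (fun p : ℝ × ℝ => Fy p.1 p.2) (Ioi 0 ×ˢ Ioi 0)
  posX : ∀ x y : ℝ, 0 < x → 0 < y → 0 < Fx x y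
  posY : ∀ x y : ℝ, 0 < x → 0 < y → 0 < Fy x y
  ratio : ∀ x y : ℝ, 0 < x → 0 < y → Fx x y / Fy x y = G (x / y)
  derivG : ∀ z : ℝ, 0 < z → HasDerivAt G (G' z) z
  contG' : ContinuousOn G' (Ioi 0)
  negG' : ∀ z : ℝ, 0 < z → G' z < 0
  tendstoG0 : Tendsto G (𝓝[>] (0:ℝ)) atTop
  tendstoGtop : Tendsto G atTop (𝓝 0)
  homog : ∀ x y x' y' c : ℝ, 0 < x → 0 < y → 0 < x' → 0 < y' → 0 < c →
    F x y = F x' y' → F (c * x) (c * y) = F (c * x') (c * y')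

theorem continuousOn_uncurry_of_hasDerivAt {E : Type*} [NormedAddCommGroup E] [NormedSpace ℝ E]
    {F Fx Fy : ℝ → ℝ → E} {s : Set (ℝ × ℝ)} (hs : IsOpen s)
    (hFx : ∀ p ∈ s, HasDerivAt (F · p.2) (Fx p.1 p.2) p.1)
    (hFy : ∀ p ∈ s, HasDerivAt (F p.1 ·) (Fy p.1 p.2) p.2)
    (hcx : ContinuousOn (Function.uncurry Fx) s) (hcy : ContinuousOn (Function.uncurry Fy) s) :
    ContinuousOn (Function.uncurry F) s := by
  intro p hp
  have hps : s ∈ 𝓝 p := hs.mem_nhds hp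
  have hspan : Continuous (ContinuousLinearMap.toSpanSingleton ℝ : E → ℝ →L[ℝ] E) :=
    ContinuousLinearMap.toSpanSingletonCLE.continuous
  exact (hasStrictFDerivAt_uncurry_coprod
    (f₁ := fun x y => ContinuousLinearMap.toSpanSingleton ℝ (Fx x y))
    (f₂ := fun x y => ContinuousLinearMap.toSpanSingleton ℝ (Fy x y))
    (mem_of_superset hps fun q hq => (hFx q hq).hasFDerivAt)
    (mem_of_superset hps fun q hq => (hFy q hq).hasFDerivAt)
    (hspan.continuousAt.comp (hcx.continuousAt hps))
    (hspan.continuousAt.comp (hcy.continuousAt hps))).continuousAt.continuousWithinAt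

namespace PricingFunction

variable {F Fx Fy : ℝ → ℝ → ℝ} {G G' : ℝ → ℝ}

theorem continuousOn_uncurry (hF : PricingFunction F Fx Fy G G') :
    ContinuousOn (Function.uncurry F) (Ioi 0 ×ˢ Ioi 0) :=
  continuousOn_uncurry_of_hasDerivAt (isOpen_Ioi.prod isOpen_Ioi)
    (fun p hp => hF.partialX p.1 p.2 hp.1 hp.2) (fun p hp => hF.partialY p.1 p.2 hp.1 hp.2)
    hF.contX hF.contY

theorem strictMonoOn_left (hF : PricingFunction F Fx Fy G G') {y : ℝ} (hy : 0 < y) :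
    StrictMonoOn (F · y) (Ioi 0) := by
  refine strictMonoOn_of_hasDerivWithinAt_pos (convex_Ioi 0)
    (fun x hx => (hF.partialX x y hx hy).continuousAt.continuousWithinAt) (f' := (Fx · y))
    (fun x hx => ?_) (fun x hx => ?_) <;> rw [interior_Ioi] at hx
  · exact (hF.partialX x y hx hy).hasDerivWithinAt
  · exact hF.posX x y hx hy

theorem strictMonoOn_right (hF : PricingFunction F Fx Fy G G') {x : ℝ} (hx : 0 < x) :
    StrictMonoOn (F x ·) (Ioi 0) := by
  refine strictMonoOn_of_hasDerivWithinAt_pos (convex_Ioi 0)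
    (fun y hy => (hF.partialY x y hx hy).continuousAt.continuousWithinAt) (f' := (Fy x ·))
    (fun y hy => ?_) (fun y hy => ?_) <;> rw [interior_Ioi] at hy
  · exact (hF.partialY x y hx hy).hasDerivWithinAt
  · exact hF.posY x y hx hy

theorem strictAntiOn_marginalRate (hF : PricingFunction F Fx Fy G G') : StrictAntiOn G (Ioi 0) := by
  refine strictAntiOn_of_hasDerivWithinAt_neg (convex_Ioi 0)
    (fun z hz => (hF.derivG z hz).continuousAt.continuousWithinAt) (f' := G')
    (fun z hz => ?_) (fun z hz => ?_) <;> rw [interior_Ioi] at hz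
  · exact (hF.derivG z hz).hasDerivWithinAt
  · exact hF.negG' z hz

theorem strictMonoOn_ray (hF : PricingFunction F Fx Fy G G') {z : ℝ} (hz : 0 < z) :
    StrictMonoOn (fun s => F (z * s) s) (Ioi 0) := by
  intro s (hs : 0 < s) t (ht : 0 < t) hst
  calc F (z * s) s < F (z * t) s :=
        hF.strictMonoOn_left hs (mul_pos hz hs) (mul_pos hz ht) (by gcongr)
    _ < F (z * t) t := hF.strictMonoOn_right (mul_pos hz ht) hs ht hst

theorem exists_mem_Ioo_ray_eq (hF : PricingFunction F Fx Fy G G') {β z : ℝ} (hβ : 0 < β)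
    (hβz : β < z) : ∃ s ∈ Ioo (β / z) 1, F (z * s) s = F β 1 := by
  have hz : 0 < z := hβ.trans hβz
  have hβz₁ : β / z < 1 := (div_lt_one hz).2 hβz
  have hpos : ∀ s ∈ Icc (β / z) 1, 0 < s := fun s hs => (div_pos hβ hz).trans_le hs.1
  have hcont : ContinuousOn (fun s => F (z * s) s) (Icc (β / z) 1) :=
    hF.continuousOn_uncurry.comp (continuousOn_const.mul continuousOn_id |>.prodMk continuousOn_id)
      fun s hs => ⟨mul_pos hz (hpos s hs), hpos s hs⟩
  have hlow : F (z * (β / z)) (β / z) < F β 1 := by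
    rw [mul_div_cancel₀ β hz.ne']
    exact hF.strictMonoOn_right hβ (div_pos hβ hz) (mem_Ioi.2 one_pos) hβz₁
  have hhigh : F β 1 < F (z * 1) 1 := by
    rw [mul_one]
    exact hF.strictMonoOn_left one_pos hβ hz hβz
  exact intermediate_value_Ioo hβz₁.le hcont ⟨hlow, hhigh⟩

end PricingFunction

/-- Proposition 1(i), second case: if `G(β)/α > 1+f`, the system
`(1−dᴬ)/(1−dᴮ) = (1/β)·G⁻¹(α(1+f))`, `F(β(1−dᴬ), 1−dᴮ) = F(β,1)` admits a
unique solution with `dᴬ < 0` and `dᴮ ∈ (0,1)`. -/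
theorem stmt1 (F Fx Fy : ℝ → ℝ → ℝ) (G G' Ginv : ℝ → ℝ)
    (hF : PricingFunction F Fx Fy G G')
    (hGinv : ∀ u : ℝ, 0 < u → 0 < Ginv u ∧ G (Ginv u) = u)
    (f : ℝ) (hf : 0 < f) (α β : ℝ) (hα : 0 < α) (hβ : 0 < β)
    (hreg : 1 + f < G β / α) :
    ∃! d : ℝ × ℝ, d.1 < 0 ∧ d.2 ∈ Ioo (0:ℝ) 1 ∧
      (1 - d.1) / (1 - d.2) = (1 / β) * Ginv (α * (1 + f)) ∧
      F (β * (1 - d.1)) (1 - d.2) = F β 1 := by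
  obtain ⟨hz, hGz⟩ := hGinv (α * (1 + f)) (by positivity)
  set z := Ginv (α * (1 + f))
  have hβz : β < z := by
    refine (hF.strictAntiOn_marginalRate.lt_iff_gt hz hβ).1 ?_
    rwa [hGz, ← lt_div_iff₀' hα]
  obtain ⟨s, ⟨hβs, hs₁⟩, hFs⟩ := hF.exists_mem_Ioo_ray_eq hβ hβz
  have hs : 0 < s := (div_pos hβ hz).trans hβs
  have hβzs : β < z * s := by rwa [div_lt_iff₀' hz] at hβs
  refine ⟨(1 - z * s / β, 1 - s), ⟨?_, ⟨?_, ?_⟩, ?_, ?_⟩, ?_⟩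
  · simpa [sub_neg, one_lt_div hβ] using hβzs
  · simpa using hs₁
  · simpa using hs
  · rw [sub_sub_cancel, sub_sub_cancel]
    field_simp
  · simpa [mul_div_cancel₀ _ hβ.ne'] using hFs
  · rintro ⟨a, b⟩ ⟨-, ⟨-, hb₁⟩, hslope, hlevel⟩
    have hb : 0 < 1 - b := sub_pos.2 hb₁
    have hray : β * (1 - a) = z * (1 - b) := by
      field_simp at hslope
      linarith
    have hsb : 1 - b = s :=
      hF.strictMonoOn_ray hz |>.injOn hb hs (by simp only [← hray, hlevel, hFs])
    refine Prod.ext ?_ (by dsimp only; linarith)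
    dsimp only
    rw [← hsb, ← hray]
    field_simp
    ring
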